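/- Let x and y be two independent random points each drawn from a γ-strongly log-concave probability distribution on ℝⁿ (possibly different distributions), with 𝔼[y] = 0. Then for any α > 0, ℙ[α⟨x,x⟩ ≤ ⟨x,y⟩] ≤ 𝔼[exp(−(γα²/2)‖x‖²)]. -/

import Mathlib

/-!
Independence lets us freeze `X = x` and integrate over `x` at the end. For fixed `x ≠ 0` the event
is `α‖x‖ ≤ ⟪x/‖x‖, Y⟫`, and `⟪x/‖x‖, ·⟫` is 1-Lipschitz with mean `⟪x/‖x‖, 𝔼 Y⟫ = 0`, so
concentration bounds its probability by `exp(-γ(α‖x‖)²/2)`. Applied to `±⟪u, ·⟫`, concentration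
also gives Gaussian tails for every coordinate of `Y`, hence the integrability of `Y` that makes
`𝔼 Y = 0` carry information.
-/

open MeasureTheory ProbabilityTheory Real Set
open scoped RealInnerProductSpace ENNReal NNReal

theorem integrable_of_measure_lt_norm_le {Ω E : Type*} [MeasurableSpace Ω] {μ : Measure Ω}
    [NormedAddCommGroup E] {Z : Ω → E} (hZ : AEStronglyMeasurable Z μ) {C c : ℝ} (hc : 0 < c)
    (h : ∀ t > 0, μ {ω | t < ‖Z ω‖} ≤ ENNReal.ofReal (C * exp (-c * t ^ 2))) :
    Integrable Z μ := by
  refine ⟨hZ, ?_⟩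
  have hgauss : Integrable (fun t : ℝ => C * exp (-c * t ^ 2)) :=
    (integrable_exp_neg_mul_sq hc).const_mul C
  rw [hasFiniteIntegral_iff_norm, lintegral_eq_lintegral_meas_lt μ
    (ae_of_all _ fun ω => norm_nonneg _) hZ.norm.aemeasurable]
  calc ∫⁻ t in Ioi 0, μ {ω | t < ‖Z ω‖}
      ≤ ∫⁻ t in Ioi 0, ENNReal.ofReal (C * exp (-c * t ^ 2)) :=
        setLIntegral_mono (by fun_prop) fun t ht => h t ht
    _ ≤ ∫⁻ t, ENNReal.ofReal (C * exp (-c * t ^ 2)) := setLIntegral_le_lintegral _ _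
    _ < ∞ := hgauss.lintegral_lt_top

theorem lipschitzWith_one_inner_right {E : Type*} [NormedAddCommGroup E] [InnerProductSpace ℝ E]
    {u : E} (hu : ‖u‖ ≤ 1) : LipschitzWith 1 fun y : E => ⟪u, y⟫ := by
  refine ((innerSL ℝ u).lipschitz).weaken ?_
  rw [← NNReal.coe_le_coe, coe_nnnorm, innerSL_apply_norm]
  exact_mod_cast hu

theorem ProbabilityTheory.IndepFun.measure_prodMk_mem_eq_lintegral {Ω E F : Type*}
    [MeasurableSpace Ω] {μ : Measure Ω} [IsFiniteMeasure μ] [MeasurableSpace E]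
    [MeasurableSpace F] {X : Ω → E} {Y : Ω → F} (hXY : IndepFun X Y μ) (hX : Measurable X)
    (hY : Measurable Y) {S : Set (E × F)} (hS : MeasurableSet S) :
    μ {ω | (X ω, Y ω) ∈ S} = ∫⁻ ω, μ {ω' | (X ω, Y ω') ∈ S} ∂μ := by
  have hmap := (indepFun_iff_map_prod_eq_prod_map_map hX.aemeasurable hY.aemeasurable).mp hXY
  have hsection : ∀ x, μ {ω' | (x, Y ω') ∈ S} = μ.map Y (Prod.mk x ⁻¹' S) := fun x =>
    (Measure.map_apply hY (measurable_prodMk_left hS)).symm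
  simp_rw [hsection]
  rw [← lintegral_map (measurable_measure_prodMk_left hS) hX, ← Measure.prod_apply hS, ← hmap,
    Measure.map_apply (hX.prodMk hY) hS]
  rfl

def HasGaussianConcentration {Ω E : Type*} [MeasurableSpace Ω] (μ : Measure Ω) (Y : Ω → E)
    [PseudoMetricSpace E] (γ : ℝ) : Prop :=
  ∀ g : E → ℝ, LipschitzWith 1 g → ∀ r : ℝ, 0 ≤ r →
    μ {ω | (∫ ω', g (Y ω') ∂μ) + r ≤ g (Y ω)} ≤ ENNReal.ofReal (exp (-γ * r ^ 2 / 2))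

namespace HasGaussianConcentration

variable {Ω E : Type*} [MeasurableSpace Ω] {μ : Measure Ω} [NormedAddCommGroup E]
  [InnerProductSpace ℝ E] {Y : Ω → E} {γ : ℝ}

theorem integrable_inner [IsFiniteMeasure μ] [MeasurableSpace E] [BorelSpace E]
    (h : HasGaussianConcentration μ Y γ) (hγ : 0 < γ) (hY : AEMeasurable Y μ) {u : E}
    (hu : ‖u‖ ≤ 1) :
    Integrable (fun ω => ⟪u, Y ω⟫) μ := by
  set m := ∫ ω, ⟪u, Y ω⟫ ∂μ
  have hm : ∫ ω, ⟪-u, Y ω⟫ ∂μ = -m := by simp only [inner_neg_left, integral_neg, m]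
  suffices Integrable (fun ω => ⟪u, Y ω⟫ + -m) μ from integrable_add_const_iff.mp this
  refine integrable_of_measure_lt_norm_le (C := 2) (c := γ / 2)
    (show AEMeasurable (fun ω => ⟪u, Y ω⟫ + -m) μ by fun_prop).aestronglyMeasurable
    (by positivity) fun t ht => ?_
  have hcover : {ω | t < ‖⟪u, Y ω⟫ + -m‖} ⊆
      {ω | m + t ≤ ⟪u, Y ω⟫} ∪ {ω | -m + t ≤ ⟪-u, Y ω⟫} := by
    intro ω hω
    simp only [mem_ofPred_eq, mem_union, Real.norm_eq_abs, lt_abs, inner_neg_left] at hω ⊢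
    rcases hω with hω | hω
    · left; linarith
    · right; linarith
  calc μ {ω | t < ‖⟪u, Y ω⟫ + -m‖}
      ≤ ENNReal.ofReal (exp (-γ * t ^ 2 / 2)) + ENNReal.ofReal (exp (-γ * t ^ 2 / 2)) :=
        (measure_mono hcover).trans <| (measure_union_le _ _).trans <|
          add_le_add (h _ (lipschitzWith_one_inner_right hu) t ht.le)
            (hm ▸ h _ (lipschitzWith_one_inner_right (by rwa [norm_neg])) t ht.le)
    _ = ENNReal.ofReal (2 * exp (-(γ / 2) * t ^ 2)) := by
        rw [← ENNReal.ofReal_add (by positivity) (by positivity)]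
        ring_nf

theorem integrable [IsFiniteMeasure μ] [FiniteDimensional ℝ E] [MeasurableSpace E]
    [BorelSpace E] (h : HasGaussianConcentration μ Y γ) (hγ : 0 < γ) (hY : AEMeasurable Y μ) :
    Integrable Y μ := by
  let b := stdOrthonormalBasis ℝ E
  have hsum : (fun ω => ∑ i, ⟪b i, Y ω⟫ • b i) = Y := funext fun ω => b.sum_repr' (Y ω)
  rw [← hsum]
  exact integrable_finsetSum _ fun i _ =>
    (h.integrable_inner hγ hY (b.orthonormal.1 i).le).smul_const _

theorem measure_mul_norm_le_inner_le (h : HasGaussianConcentration μ Y γ)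
    (hmean : ∀ x, ∫ ω, ⟪x, Y ω⟫ ∂μ = 0) {x : E} (hx : x ≠ 0) {r : ℝ} (hr : 0 ≤ r) :
    μ {ω | r * ‖x‖ ≤ ⟪x, Y ω⟫} ≤ ENNReal.ofReal (exp (-γ * r ^ 2 / 2)) := by
  have hxn : 0 < ‖x‖ := norm_pos_iff.mpr hx
  have hu : ‖‖x‖⁻¹ • x‖ ≤ 1 := by rw [norm_smul, norm_inv, norm_norm, inv_mul_cancel₀ hxn.ne']
  convert h _ (lipschitzWith_one_inner_right hu) r hr using 2
  ext ω
  simp only [mem_ofPred_eq, real_inner_smul_left, integral_const_mul, hmean, mul_zero, zero_add]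
  rw [le_inv_mul_iff₀ hxn, mul_comm]

theorem measure_mul_inner_self_le_inner_le [IsProbabilityMeasure μ]
    (h : HasGaussianConcentration μ Y γ) (hmean : ∀ x, ∫ ω, ⟪x, Y ω⟫ ∂μ = 0) {α : ℝ}
    (hα : 0 ≤ α) (x : E) :
    μ {ω | α * ⟪x, x⟫ ≤ ⟪x, Y ω⟫} ≤ ENNReal.ofReal (exp (-(γ * α ^ 2 / 2) * ‖x‖ ^ 2)) := by
  rcases eq_or_ne x 0 with rfl | hx
  · simp
  convert h.measure_mul_norm_le_inner_le hmean hx (mul_nonneg hα (norm_nonneg x)) using 3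
  · rw [real_inner_self_eq_norm_sq, sq, mul_assoc]
  · ring

end HasGaussianConcentration

theorem stmt_4 {Ω : Type*} [MeasurableSpace Ω] (μ : Measure Ω) [IsProbabilityMeasure μ]
    (n : ℕ) (γ α : ℝ) (hγ : 0 < γ) (hα : 0 < α)
    (X Y : Ω → EuclideanSpace ℝ (Fin n)) (hXm : Measurable X) (hYm : Measurable Y)
    (hindep : IndepFun X Y μ)
    (hY0 : ∫ ω, Y ω ∂μ = 0)
    (hconc : ∀ g : EuclideanSpace ℝ (Fin n) → ℝ, LipschitzWith 1 g → ∀ r : ℝ, 0 ≤ r →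
      μ {ω | (∫ ω', g (Y ω') ∂μ) + r ≤ g (Y ω)} ≤ ENNReal.ofReal (Real.exp (-γ * r^2 / 2))) :
    (μ {ω | α * ⟪X ω, X ω⟫ ≤ ⟪X ω, Y ω⟫}).toReal ≤
      ∫ ω, Real.exp (-(γ * α^2 / 2) * ‖X ω‖^2) ∂μ := by
  have hconc : HasGaussianConcentration μ Y γ := hconc
  have hmean : ∀ x, ∫ ω, ⟪x, Y ω⟫ ∂μ = 0 := fun x => by
    rw [integral_inner (hconc.integrable hγ hYm.aemeasurable), hY0, inner_zero_right]
  have hS : MeasurableSet {p : EuclideanSpace ℝ (Fin n) × EuclideanSpace ℝ (Fin n) |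
      α * ⟪p.1, p.1⟫ ≤ ⟪p.1, p.2⟫} := measurableSet_le (by fun_prop) (by fun_prop)
  have hexp : Integrable (fun ω => exp (-(γ * α ^ 2 / 2) * ‖X ω‖ ^ 2)) μ := by
    refine .of_bound (by fun_prop) 1 (ae_of_all _ fun ω => ?_)
    rw [norm_of_nonneg (exp_pos _).le, exp_le_one_iff]
    have : 0 ≤ γ * α ^ 2 / 2 * ‖X ω‖ ^ 2 := by positivity
    linarith
  refine ENNReal.toReal_le_of_le_ofReal (integral_nonneg fun _ => (exp_pos _).le) ?_
  rw [ofReal_integral_eq_lintegral_ofReal hexp (ae_of_all _ fun _ => (exp_pos _).le)]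
  calc μ {ω | α * ⟪X ω, X ω⟫ ≤ ⟪X ω, Y ω⟫}
      = ∫⁻ ω, μ {ω' | α * ⟪X ω, X ω⟫ ≤ ⟪X ω, Y ω'⟫} ∂μ :=
        hindep.measure_prodMk_mem_eq_lintegral hXm hYm hS
    _ ≤ _ := lintegral_mono fun ω => hconc.measure_mul_inner_self_le_inner_le hmean hα.le (X ω)
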